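/- Let 𝓕 = {C_λ}_{λ∈U} be a family of real plane curves of degree d satisfying the standing assumptions, with finite base locus B(ℂ), and set ν_opt := d² − #B(ℂ) + 1. Fix λ ∈ U, take ν_opt arbitrary distinct real points p₁,…,p_{ν_opt} ∈ C_λ \ B_aff, and set T_opt := ⋂_{j=1}^{ν_opt} Γ_{p_j}(𝓕) and T := ⋂_{p∈C_λ} Γ_p(𝓕). Then every λ' ∈ T_opt ∩ U belongs to T; in particular T_opt ∩ U = T ∩ U. -/

import Mathlib

/-!
If the homogenization of `f_λ` divides that of `f_λ'`, every point of `C_λ` lies on `C_λ'`.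
Otherwise the two projective closures are degree-`d` curves, the first irreducible, without a
common component, and they share the `#B(ℂ)` base points and the `ν_opt` points `p_j`, that is
at least `d² + 1` points. This contradicts the weak Bézout bound: curves `f = 0`, `g = 0` of
degrees `m`, `n` in `ℙ²` without a common component meet in at most `m n` points. For the bound,
count dimensions in degree `k = m + n + e` of the polynomial ring: since `f` is prime, the only
syzygy of `(f, g)` is the Koszul one, so the degree-`k` part of the ideal `(f, g)` has dimension
`dim S_{k-m} + dim S_{k-n} - dim S_{k-m-n} = dim S_k - m n`, while `N` common zeros impose `N`
independent linear conditions on `S_k` as soon as `k + 1 ≥ N`.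
-/

open MvPolynomial

noncomputable section

/-- `fLam F lam` is the plane polynomial `f_λ(x,y) = F(x,y;λ)`. -/
def fLam {t : ℕ} (F : MvPolynomial (Fin 2) (MvPolynomial (Fin t) ℝ)) (lam : Fin t → ℝ) :
    MvPolynomial (Fin 2) ℝ :=
  MvPolynomial.map (MvPolynomial.eval lam) F

/-- `houghPoly F p` is the polynomial `f_p(Λ) = F(x_p,y_p;Λ)` in the parameters. -/
def houghPoly {t : ℕ} (F : MvPolynomial (Fin 2) (MvPolynomial (Fin t) ℝ)) (p : Fin 2 → ℝ) :
    MvPolynomial (Fin t) ℝ :=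
  MvPolynomial.eval₂ (RingHom.id _) (fun i => MvPolynomial.C (p i)) F

/-- The Hough transform `Γ_p(𝓕) = {λ ∈ ℝ^t : f_p(λ) = 0}`. -/
def Gamma {t : ℕ} (F : MvPolynomial (Fin 2) (MvPolynomial (Fin t) ℝ)) (p : Fin 2 → ℝ) :
    Set (Fin t → ℝ) :=
  {mu | MvPolynomial.eval mu (houghPoly F p) = 0}

/-- The curve `C_λ = {(x,y) ∈ ℝ² : f_λ(x,y) = 0}`. -/
def Curve {t : ℕ} (F : MvPolynomial (Fin 2) (MvPolynomial (Fin t) ℝ)) (lam : Fin t → ℝ) :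
    Set (Fin 2 → ℝ) :=
  {p | MvPolynomial.eval p (fLam F lam) = 0}

/-- The affine base locus `B_aff = {p ∈ ℂ² : f_λ(p) = 0 for all λ ∈ U}`. -/
def Baff {t : ℕ} (F : MvPolynomial (Fin 2) (MvPolynomial (Fin t) ℝ)) (U : Set (Fin t → ℝ)) :
    Set (Fin 2 → ℂ) :=
  {q | ∀ lam ∈ U, MvPolynomial.aeval q (fLam F lam) = 0}

/-- The degree-`d` homogenization of a plane polynomial, viewed with complex coefficients:
the defining polynomial of the projective closure in `ℙ²(ℂ)`. -/
def projPoly (d : ℕ) (g : MvPolynomial (Fin 2) ℝ) : MvPolynomial (Fin 3) ℂ :=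
  g.support.sum fun m =>
    MvPolynomial.monomial
      (Finsupp.equivFunOnFinite.symm ![m 0, m 1, d - (m 0 + m 1)])
      ((g.coeff m : ℝ) : ℂ)

/-- The base locus `B(ℂ)`: points of `ℙ²(ℂ)` lying on the projective closure of every
curve `C_λ`, `λ ∈ U`. -/
def BaseLocus {t : ℕ} (F : MvPolynomial (Fin 2) (MvPolynomial (Fin t) ℝ))
    (U : Set (Fin t → ℝ)) (d : ℕ) : Set (Projectivization ℂ (Fin 3 → ℂ)) :=
  {P | ∀ lam ∈ U, MvPolynomial.eval P.rep (projPoly d (fLam F lam)) = 0}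

/-- Standing assumptions: each `f_λ` is non-constant, irreducible of total degree `d`, its
homogenization is irreducible, and `C_λ` has infinitely many real points. -/
def StandingAssumptions {t : ℕ} (F : MvPolynomial (Fin 2) (MvPolynomial (Fin t) ℝ))
    (U : Set (Fin t → ℝ)) (d : ℕ) : Prop :=
  ∀ lam ∈ U, 0 < (fLam F lam).totalDegree ∧ (fLam F lam).totalDegree = d ∧
    Irreducible (fLam F lam) ∧ Irreducible (projPoly d (fLam F lam)) ∧
    (Curve F lam).Infinite

/-- The family `𝓕 = {C_λ}` is Hough regular if `C_λ = C_λ'` implies `λ = λ'` for `λ, λ' ∈ U`. -/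
def HoughRegular {t : ℕ} (F : MvPolynomial (Fin 2) (MvPolynomial (Fin t) ℝ))
    (U : Set (Fin t → ℝ)) : Prop :=
  ∀ lam ∈ U, ∀ lam' ∈ U, Curve F lam = Curve F lam' → lam = lam'

open Module
open scoped LinearAlgebra.Projectivization

theorem Nat.choose_two_add_choose_two (m n e : ℕ) :
    (m + n + e + 2).choose 2 + (e + 2).choose 2 =
      (n + e + 2).choose 2 + (m + e + 2).choose 2 + m * n := by
  apply Nat.cast_injective (R := ℚ)
  push_cast [Nat.cast_choose_two]
  ring

namespace MvPolynomial

variable {σ R K : Type*}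

section CommSemiring

variable [CommSemiring R]

attribute [local instance] MvPolynomial.gradedAlgebra in
theorem homogeneousComponent_add_mul_of_isHomogeneous {f : MvPolynomial σ R} {m : ℕ}
    (hf : f.IsHomogeneous m) (c : MvPolynomial σ R) (i : ℕ) :
    homogeneousComponent (m + i) (f * c) = f * homogeneousComponent i c := by
  rw [← decomposition.decompose'_apply, ← decomposition.decompose'_apply]
  exact DirectSum.coe_decompose_mul_add_of_left_mem (homogeneousSubmodule σ R) hf

theorem IsHomogeneous.eval_smul {φ : MvPolynomial σ R} {n : ℕ} (hφ : φ.IsHomogeneous n)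
    (a : R) (x : σ → R) : eval (a • x) φ = a ^ n * eval x φ := by
  rw [eval_eq, eval_eq, Finset.mul_sum]
  refine Finset.sum_congr rfl fun d hd => ?_
  simp only [Pi.smul_apply, smul_eq_mul, mul_pow, Finset.prod_mul_distrib,
    Finset.prod_pow_eq_pow_sum, ← hφ.degree_eq_sum_deg_support hd]
  ring

instance [Finite σ] (n : ℕ) : Module.Finite R (homogeneousSubmodule σ R n) :=
  Module.Finite.iff_fg.mpr (homogeneousSubmodule_fg σ R n)

end CommSemiring

section IsDomain

variable [CommRing R] [IsDomain R]

theorem IsHomogeneous.of_mul_left {f c : MvPolynomial σ R} {m n : ℕ}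
    (hf : f.IsHomogeneous m) (hf0 : f ≠ 0) (h : (f * c).IsHomogeneous (m + n)) :
    c.IsHomogeneous n := by
  intro d hd
  have hweight : Finsupp.weight 1 d = d.degree := by rw [Finsupp.degree_eq_weight_one]; rfl
  rw [hweight]
  by_contra hdn
  have hcomp : homogeneousComponent d.degree c = 0 := by
    have := homogeneousComponent_add_mul_of_isHomogeneous hf c d.degree
    rw [homogeneousComponent_of_mem h, if_neg (by omega)] at this
    exact (mul_eq_zero.mp this.symm).resolve_left hf0
  exact hd (by simpa [hcomp] using (coeff_homogeneousComponent d.degree c d).symm)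

theorem exists_isHomogeneous_of_mul_add_mul_eq_zero {f g a b : MvPolynomial σ R} {m e : ℕ}
    (hf : f.IsHomogeneous m) (hfp : Prime f) (hfg : ¬f ∣ g) (hb : b.IsHomogeneous (m + e))
    (h : f * a + g * b = 0) : ∃ c, c.IsHomogeneous e ∧ a = -(g * c) ∧ b = f * c := by
  obtain ⟨c, rfl⟩ : f ∣ b := (hfp.dvd_or_dvd ⟨-a, by linear_combination h⟩).resolve_left hfg
  refine ⟨c, hf.of_mul_left hfp.ne_zero hb, mul_left_cancel₀ hfp.ne_zero ?_, rfl⟩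
  linear_combination h

end IsDomain

section Field

variable [Field K]

theorem IsHomogeneous.eval_rep_mk_eq_zero_iff {φ : MvPolynomial σ K} {n : ℕ}
    (hφ : φ.IsHomogeneous n) {x : σ → K} (hx : x ≠ 0) :
    eval (Projectivization.mk K x hx).rep φ = 0 ↔ eval x φ = 0 := by
  obtain ⟨a, ha⟩ := Projectivization.exists_smul_eq_mk_rep K x hx
  rw [← ha, Units.smul_def, hφ.eval_smul]
  simp

section Fintype

variable [Fintype σ]

theorem finrank_homogeneousSubmodule (n : ℕ) :
    finrank K (homogeneousSubmodule σ K n) = (Fintype.card σ + n - 1).choose n := by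
  classical
  have hset : {d : σ →₀ ℕ | d.degree = n} = ↑((Finset.univ : Finset σ).finsuppAntidiag n) := by
    ext d; simp [Finsupp.degree_eq_sum]
  rw [homogeneousSubmodule_eq_finsupp_supported, hset,
    (AddMonoidAlgebra.supportedEquivFinsupp _).finrank_eq, finrank_finsupp_self]
  simp [Finset.card_finsuppAntidiag_nat_eq_choose]

theorem card_add_finrank_homogeneousSubmodule_le {f g : MvPolynomial σ K} {m n e : ℕ}
    (hf : f.IsHomogeneous m) (hg : g.IsHomogeneous n) (hfp : Prime f) (hfg : ¬f ∣ g)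
    {ι : Type*} [Fintype ι] (h : ι → MvPolynomial σ K) (hh : ∀ i, (h i).IsHomogeneous (m + n + e))
    (hind : ∀ (c : ι → K) (a b : MvPolynomial σ K), ∑ i, c i • h i + f * a + g * b = 0 → c = 0) :
    Fintype.card ι + finrank K (homogeneousSubmodule σ K (n + e)) +
        finrank K (homogeneousSubmodule σ K (m + e)) ≤
      finrank K (homogeneousSubmodule σ K (m + n + e)) + finrank K (homogeneousSubmodule σ K e) := by
  let Φ := (Fintype.linearCombination K h).coprod
    ((LinearMap.mulLeft K f ∘ₗ (homogeneousSubmodule σ K (n + e)).subtype).coprod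
      (LinearMap.mulLeft K g ∘ₗ (homogeneousSubmodule σ K (m + e)).subtype))
  have hΦ : ∀ x, Φ x = ∑ i, x.1 i • h i + (f * x.2.1 + g * x.2.2) := fun x => by
    simp [Φ, Fintype.linearCombination_apply]
  let koszul : homogeneousSubmodule σ K e →ₗ[K]
      (ι → K) × homogeneousSubmodule σ K (n + e) × homogeneousSubmodule σ K (m + e) :=
    LinearMap.prod 0 <| LinearMap.prod
      (LinearMap.codRestrict _ (-(LinearMap.mulLeft K g ∘ₗ (homogeneousSubmodule σ K e).subtype))
        fun c => (hg.mul c.2).neg)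
      (LinearMap.codRestrict _ (LinearMap.mulLeft K f ∘ₗ (homogeneousSubmodule σ K e).subtype)
        fun c => hf.mul c.2)
  have hrange : LinearMap.range Φ ≤ homogeneousSubmodule σ K (m + n + e) := by
    rintro _ ⟨⟨c, a, b⟩, rfl⟩
    have hfa : f * a ∈ homogeneousSubmodule σ K (m + n + e) := by
      rw [add_assoc]; exact hf.mul a.2
    have hgb : g * b ∈ homogeneousSubmodule σ K (m + n + e) := by
      rw [add_comm m, add_assoc]; exact hg.mul b.2
    rw [hΦ]
    exact add_mem (Submodule.sum_mem _ fun i _ => Submodule.smul_mem _ _ (hh i)) (add_mem hfa hgb)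
  have hker : LinearMap.ker Φ ≤ LinearMap.range koszul := by
    rintro ⟨c, a, b⟩ hx
    have hsum : ∑ i, c i • h i + f * a + g * b = 0 := by
      rw [add_assoc, ← hΦ (c, a, b)]; exact hx
    obtain rfl := hind c a b hsum
    obtain ⟨c', hc', ha, hb⟩ :=
      exists_isHomogeneous_of_mul_add_mul_eq_zero hf hfp hfg b.2 (by simpa using hsum)
    exact ⟨⟨c', hc'⟩, Prod.ext rfl (Prod.ext (Subtype.ext ha.symm) (Subtype.ext hb.symm))⟩
  have hrank := LinearMap.finrank_range_add_finrank_ker Φ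
  have hrange_le := Submodule.finrank_mono hrange
  have hker_le := (Submodule.finrank_mono hker).trans (LinearMap.finrank_range_le koszul)
  simp only [finrank_prod, finrank_fintype_fun_eq_card] at hrank
  omega

theorem eval_sum_C_mul_X [DecidableEq σ] (φ : Dual K (σ → K)) (x : σ → K) :
    eval x (∑ i, C (φ (Pi.single i 1)) * X i) = φ x := by
  have hsingle : ∀ i : σ, (fun j => if i = j then (1 : K) else 0) = Pi.single i 1 := fun i => by
    ext j; simp [Pi.single_apply, eq_comm]
  simp [LinearMap.pi_apply_eq_sum_univ φ x, hsingle, mul_comm]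

theorem exists_isHomogeneous_one_eval_rep_ne_zero {P Q : ℙ K (σ → K)} (hPQ : P ≠ Q) :
    ∃ ℓ : MvPolynomial σ K, ℓ.IsHomogeneous 1 ∧ eval P.rep ℓ ≠ 0 ∧ eval Q.rep ℓ = 0 := by
  classical
  have hP : P.rep ∉ K ∙ Q.rep := by
    rw [Submodule.mem_span_singleton]
    rintro ⟨a, ha⟩
    apply hPQ
    rw [← P.mk_rep, ← Q.mk_rep, Projectivization.mk_eq_mk_iff']
    exact ⟨a, ha⟩
  obtain ⟨φ, hφP, hφQ⟩ := Submodule.exists_dual_map_eq_bot_of_notMem hP inferInstance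
  refine ⟨∑ i, C (φ (Pi.single i 1)) * X i,
    IsHomogeneous.sum _ _ _ fun i _ => isHomogeneous_C_mul_X _ i, ?_, ?_⟩
  · rwa [eval_sum_C_mul_X]
  · have h := Submodule.mem_map_of_mem (f := φ) (Submodule.mem_span_singleton_self Q.rep)
    rwa [hφQ, Submodule.mem_bot, ← eval_sum_C_mul_X] at h

theorem exists_isHomogeneous_eval_rep_ne_zero {S : Finset (ℙ K (σ → K))} {P : ℙ K (σ → K)}
    (hP : P ∈ S) {k : ℕ} (hk : S.card ≤ k + 1) :
    ∃ h : MvPolynomial σ K, h.IsHomogeneous k ∧ eval P.rep h ≠ 0 ∧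
      ∀ Q ∈ S, Q ≠ P → eval Q.rep h = 0 := by
  classical
  obtain ⟨s, hs⟩ : ∃ s, P.rep s ≠ 0 := Function.ne_iff.mp P.rep_nonzero
  have hsep (Q : S.erase P) : ∃ ℓ : MvPolynomial σ K,
      ℓ.IsHomogeneous 1 ∧ eval P.rep ℓ ≠ 0 ∧ eval Q.1.rep ℓ = 0 :=
    exists_isHomogeneous_one_eval_rep_ne_zero (Finset.ne_of_mem_erase Q.2).symm
  choose ℓ hℓ hℓP hℓQ using hsep
  have hcard : (S.erase P).card = S.card - 1 := Finset.card_erase_of_mem hP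
  refine ⟨X s ^ (k - (S.card - 1)) * ∏ Q, ℓ Q, ?_, ?_, fun Q hQ hQP => ?_⟩
  · have := (isHomogeneous_X_pow s (k - (S.card - 1))).mul
      (IsHomogeneous.prod Finset.univ ℓ (fun _ => 1) fun Q _ => hℓ Q)
    convert this using 1
    simp [hcard]
    omega
  · simpa [Finset.prod_ne_zero_iff, hs] using hℓP
  · have hQ' : Q ∈ S.erase P := Finset.mem_erase.mpr ⟨hQP, hQ⟩
    rw [map_mul, map_prod]
    exact mul_eq_zero_of_right _ (Finset.prod_eq_zero (Finset.mem_univ ⟨Q, hQ'⟩) (hℓQ ⟨Q, hQ'⟩))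

end Fintype

theorem finrank_homogeneousSubmodule_fin_three (n : ℕ) :
    finrank K (homogeneousSubmodule (Fin 3) K n) = (n + 2).choose 2 := by
  rw [finrank_homogeneousSubmodule, Fintype.card_fin, show 3 + n - 1 = n + 2 by omega,
    Nat.choose_symm_add]

theorem ncard_le_mul_of_eval_rep_eq_zero {f g : MvPolynomial (Fin 3) K} {m n : ℕ}
    (hf : f.IsHomogeneous m) (hg : g.IsHomogeneous n) (hfp : Prime f) (hfg : ¬f ∣ g)
    {Z : Set (ℙ K (Fin 3 → K))} (hZ : Z.Finite)
    (hZfg : ∀ P ∈ Z, eval P.rep f = 0 ∧ eval P.rep g = 0) : Z.ncard ≤ m * n := by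
  lift Z to Finset (ℙ K (Fin 3 → K)) using hZ
  rw [Set.ncard_coe_finset]
  have hsep (P : Z) : ∃ h : MvPolynomial (Fin 3) K, h.IsHomogeneous (m + n + Z.card) ∧
      eval P.1.rep h ≠ 0 ∧ ∀ Q ∈ Z, Q ≠ P.1 → eval Q.rep h = 0 :=
    exists_isHomogeneous_eval_rep_ne_zero P.2 (by omega)
  choose h hh hhP hhQ using hsep
  have hind (c : Z → K) (a b : MvPolynomial (Fin 3) K)
      (hc : ∑ P, c P • h P + f * a + g * b = 0) : c = 0 := by
    funext P
    have hP := congrArg (eval P.1.rep) hc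
    rw [map_add, map_add, map_mul, map_mul, (hZfg P P.2).1, (hZfg P P.2).2, map_sum,
      Finset.sum_eq_single P (fun Q _ hQP => by
        rw [smul_eval, hhQ Q P.1 P.2 (Subtype.coe_ne_coe.mpr hQP).symm, mul_zero])
        (by simp)] at hP
    simpa [hhP P] using hP
  have := card_add_finrank_homogeneousSubmodule_le hf hg hfp hfg h hh hind
  simp only [finrank_homogeneousSubmodule_fin_three, Fintype.card_coe] at this
  have := Nat.choose_two_add_choose_two m n Z.card
  omega

end Field

theorem aeval_ofReal (φ : MvPolynomial σ ℝ) (q : σ → ℝ) :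
    aeval (fun i => (q i : ℂ)) φ = eval q φ :=
  (eval₂_comp_left (algebraMap ℝ ℂ) (RingHom.id ℝ) q φ).symm

end MvPolynomial

theorem isHomogeneous_projPoly {g : MvPolynomial (Fin 2) ℝ} {d : ℕ} (hg : g.totalDegree ≤ d) :
    (projPoly d g).IsHomogeneous d := by
  refine IsHomogeneous.sum _ _ _ fun m hm => isHomogeneous_monomial _ ?_
  have hdeg : m.degree ≤ d := (le_totalDegree hm).trans hg
  rw [Finsupp.degree_eq_sum, Fin.sum_univ_two] at hdeg
  simp [Finsupp.degree_eq_sum, Fin.sum_univ_three]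
  omega

theorem eval_projPoly (d : ℕ) (g : MvPolynomial (Fin 2) ℝ) (q : Fin 2 → ℝ) :
    eval ![(q 0 : ℂ), q 1, 1] (projPoly d g) = eval q g := by
  rw [projPoly, map_sum, eval_eq', Complex.ofReal_sum]
  refine Finset.sum_congr rfl fun m _ => ?_
  simp [eval_monomial, Finsupp.prod_fintype, Fin.prod_univ_three]

def affinePoint (q : Fin 2 → ℝ) : ℙ ℂ (Fin 3 → ℂ) :=
  Projectivization.mk ℂ ![(q 0 : ℂ), q 1, 1] fun h => by simpa using congrFun h 2

theorem affinePoint_injective : Function.Injective affinePoint := by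
  intro q q' h
  obtain ⟨a, ha⟩ := (Projectivization.mk_eq_mk_iff' ℂ _ _ _ _).mp h
  obtain rfl : a = 1 := by simpa using congrFun ha 2
  funext i
  fin_cases i
  · simpa using (congrFun ha 0).symm
  · simpa using (congrFun ha 1).symm

theorem eval_rep_affinePoint_eq_zero_iff {g : MvPolynomial (Fin 2) ℝ} {d : ℕ}
    (hg : g.totalDegree ≤ d) (q : Fin 2 → ℝ) :
    eval (affinePoint q).rep (projPoly d g) = 0 ↔ eval q g = 0 := by
  rw [affinePoint, (isHomogeneous_projPoly hg).eval_rep_mk_eq_zero_iff, eval_projPoly,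
    Complex.ofReal_eq_zero]

section HoughTransform

variable {t : ℕ}

theorem eval_houghPoly (F : MvPolynomial (Fin 2) (MvPolynomial (Fin t) ℝ)) (q : Fin 2 → ℝ)
    (mu : Fin t → ℝ) : eval mu (houghPoly F q) = eval q (fLam F mu) := by
  rw [houghPoly, fLam, eval_map, eval₂_comp_left (eval mu) (RingHom.id _) _ F]
  congr 1
  ext r : 1
  simp

theorem mem_Gamma_iff {F : MvPolynomial (Fin 2) (MvPolynomial (Fin t) ℝ)} {q : Fin 2 → ℝ}
    {mu : Fin t → ℝ} : mu ∈ Gamma F q ↔ q ∈ Curve F mu := by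
  simp only [Gamma, Curve, Set.mem_ofPred_eq, eval_houghPoly]

variable {F : MvPolynomial (Fin 2) (MvPolynomial (Fin t) ℝ)} {U : Set (Fin t → ℝ)} {d : ℕ}

theorem affinePoint_notMem_baseLocus (hstand : StandingAssumptions F U d) {q : Fin 2 → ℝ}
    (hq : (fun i => (q i : ℂ)) ∉ Baff F U) : affinePoint q ∉ BaseLocus F U d := fun hB =>
  hq fun mu hmu => by
    rw [aeval_ofReal, Complex.ofReal_eq_zero,
      ← eval_rep_affinePoint_eq_zero_iff (hstand mu hmu).2.1.le]
    exact hB mu hmu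

theorem curve_subset_curve (hstand : StandingAssumptions F U d) (hBfin : (BaseLocus F U d).Finite)
    {lam lam' : Fin t → ℝ} (hlam : lam ∈ U) (hlam' : lam' ∈ U) {S : Set (Fin 2 → ℝ)}
    (hSfin : S.Finite) (hS : S ⊆ Curve F lam ∩ Curve F lam')
    (hSB : ∀ q ∈ S, (fun i => (q i : ℂ)) ∉ Baff F U)
    (hcard : d ^ 2 < (BaseLocus F U d).ncard + S.ncard) : Curve F lam ⊆ Curve F lam' := by
  obtain ⟨-, hdeg, -, hirr, -⟩ := hstand lam hlam
  obtain ⟨-, hdeg', -⟩ := hstand lam' hlam'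
  intro q hq
  by_cases hdvd : projPoly d (fLam F lam) ∣ projPoly d (fLam F lam')
  · obtain ⟨u, hu⟩ := hdvd
    have := congrArg (eval ![(q 0 : ℂ), q 1, 1]) hu
    rwa [map_mul, eval_projPoly, eval_projPoly, show eval q (fLam F lam) = 0 from hq,
      Complex.ofReal_zero, zero_mul, Complex.ofReal_eq_zero] at this
  · let Z := BaseLocus F U d ∪ affinePoint '' S
    have hZ : ∀ P ∈ Z, eval P.rep (projPoly d (fLam F lam)) = 0 ∧
        eval P.rep (projPoly d (fLam F lam')) = 0 := by
      rintro P (hP | ⟨q', hq', rfl⟩)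
      · exact ⟨hP lam hlam, hP lam' hlam'⟩
      · rw [eval_rep_affinePoint_eq_zero_iff hdeg.le, eval_rep_affinePoint_eq_zero_iff hdeg'.le]
        exact hS hq'
    have hdisj : Disjoint (BaseLocus F U d) (affinePoint '' S) := by
      rw [Set.disjoint_right]
      rintro _ ⟨q', hq', rfl⟩
      exact affinePoint_notMem_baseLocus hstand (hSB q' hq')
    have hZcard : Z.ncard = (BaseLocus F U d).ncard + S.ncard := by
      rw [Set.ncard_union_eq hdisj hBfin (hSfin.image _),
        Set.ncard_image_of_injective _ affinePoint_injective]
    have hbezout := ncard_le_mul_of_eval_rep_eq_zero (isHomogeneous_projPoly hdeg.le)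
      (isHomogeneous_projPoly hdeg'.le) (UniqueFactorizationMonoid.irreducible_iff_prime.mp hirr)
      hdvd (hBfin.union (hSfin.image _)) hZ
    rw [hZcard, ← sq] at hbezout
    omega

end HoughTransform

theorem statement3_general (t d : ℕ)
    (F : MvPolynomial (Fin 2) (MvPolynomial (Fin t) ℝ)) (U : Set (Fin t → ℝ))
    (hstand : StandingAssumptions F U d)
    (hBfin : (BaseLocus F U d).Finite)
    (lam : Fin t → ℝ) (hlam : lam ∈ U)
    (p : Fin (d ^ 2 - (BaseLocus F U d).ncard + 1) → (Fin 2 → ℝ))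
    (hinj : Function.Injective p)
    (hp : ∀ j, p j ∈ Curve F lam ∧ (fun i => ((p j i : ℝ) : ℂ)) ∉ Baff F U) :
    ((⋂ j, Gamma F (p j)) ∩ U ⊆ ⋂ q ∈ Curve F lam, Gamma F q) ∧
    (⋂ j, Gamma F (p j)) ∩ U = (⋂ q ∈ Curve F lam, Gamma F q) ∩ U := by
  have hsub : (⋂ j, Gamma F (p j)) ∩ U ⊆ ⋂ q ∈ Curve F lam, Gamma F q := by
    rintro lam' ⟨hT, hlam'⟩
    have hpC : Set.range p ⊆ Curve F lam ∩ Curve F lam' := by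
      rintro _ ⟨j, rfl⟩
      exact ⟨(hp j).1, mem_Gamma_iff.mp (Set.mem_iInter.mp hT j)⟩
    have hcard : d ^ 2 < (BaseLocus F U d).ncard + (Set.range p).ncard := by
      rw [Set.ncard_range_of_injective hinj, Nat.card_eq_fintype_card, Fintype.card_fin]
      omega
    have hC := curve_subset_curve hstand hBfin hlam hlam' (Set.finite_range p) hpC
      (by rintro _ ⟨j, rfl⟩; exact (hp j).2) hcard
    exact Set.mem_iInter₂.mpr fun q hq => mem_Gamma_iff.mpr (hC hq)
  refine ⟨hsub, subset_antisymm (fun x hx => ⟨hsub hx, hx.2⟩) ?_⟩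
  rintro x ⟨hT, hU⟩
  exact ⟨Set.mem_iInter.mpr fun j => Set.mem_iInter₂.mp hT (p j) (hp j).1, hU⟩

/-- Proposition, part 2. With `ν_opt := d² − #B(ℂ) + 1` and `ν_opt` distinct
real points `p_j ∈ C_λ \ B_aff`, setting `T_opt := ⋂_j Γ_{p_j}(𝓕)` and
`T := ⋂_{p ∈ C_λ} Γ_p(𝓕)`, every `λ' ∈ T_opt ∩ U` belongs to `T`; in particular
`T_opt ∩ U = T ∩ U`. -/
theorem statement3 (t d : ℕ) (hd : 0 < d)
    (F : MvPolynomial (Fin 2) (MvPolynomial (Fin t) ℝ)) (U : Set (Fin t → ℝ))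
    (hstand : StandingAssumptions F U d)
    (hBfin : (BaseLocus F U d).Finite)
    (lam : Fin t → ℝ) (hlam : lam ∈ U)
    (p : Fin (d ^ 2 - (BaseLocus F U d).ncard + 1) → (Fin 2 → ℝ))
    (hinj : Function.Injective p)
    (hp : ∀ j, p j ∈ Curve F lam ∧ (fun i => ((p j i : ℝ) : ℂ)) ∉ Baff F U) :
    ((⋂ j, Gamma F (p j)) ∩ U ⊆ ⋂ q ∈ Curve F lam, Gamma F q) ∧
    (⋂ j, Gamma F (p j)) ∩ U = (⋂ q ∈ Curve F lam, Gamma F q) ∩ U :=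
  statement3_general t d F U hstand hBfin lam hlam p hinj hp

end
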